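/- Let S and A be nonempty finite sets, R : S → A → ℝ a fixed reward, and for each a ∈ A a fixed row-stochastic kernel P_a : S → S → ℝ. Let χ : ℝ → S → A → ℝ be differentiable with χ(t)(s, ·) a probability distribution on A for each t, s, and define T(t)(s) = ∑_a χ(t)(s, a) R(s, a) and P(t)(s, s') = ∑_a χ(t)(s, a) P_a(s, s'). Let π : ℝ → S → ℝ be differentiable with ∑_s π(t)(s) = 1 and ∑_s π(t)(s) P(t)(s, s') = π(t)(s') for all t, s', set ξ(t) = ∑_s π(t)(s) T(t)(s), and suppose d : ℝ → S → ℝ satisfies the Poisson equation d(t)(s) = T(t)(s) − ξ(t) + ∑_{s'} P(t)(s, s') d(t)(s') for all t, s. Define q(t)(s, a) = R(s, a) − ξ(t) + ∑_{s'} P_a(s, s') d(t)(s'). Then ξ'(t) = ∑_{s ∈ S} ∑_{a ∈ A} π(t)(s) · χ'(t)(s, a) · q(t)(s, a). -/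

import Mathlib

/-!
Differentiating `ξ = π ⬝ᵥ T` gives `ξ' = π' ⬝ᵥ T + π ⬝ᵥ T'`. Differentiating the balance
equation `π P = π` gives `π' (I - P) = π P'`; since `∑ π' = 0`, the Poisson equation
`T = (I - P) d + ξ 𝟙` turns `π' ⬝ᵥ T` into `π P' d`. Finally `T'` and `P'` are linear in `χ'`,
and the `-ξ` term of `q` drops out because `∑ₐ χ' = 0`.
-/

open Matrix

section

variable {S : Type*} [Fintype S]

lemma sum_eq_zero_of_hasDerivAt_of_sum_const {f : S → ℝ → ℝ} {f' : S → ℝ} {t c : ℝ}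
    (hf : ∀ i, HasDerivAt (f i) (f' i) t) (hc : ∀ u, ∑ i, f i u = c) : ∑ i, f' i = 0 :=
  (HasDerivAt.fun_sum fun i _ => hf i).unique (by simpa only [hc] using hasDerivAt_const t c)

lemma hasDerivAt_dotProduct {f g : ℝ → S → ℝ} {f' g' : S → ℝ} {t : ℝ}
    (hf : ∀ i, HasDerivAt (fun u => f u i) (f' i) t)
    (hg : ∀ i, HasDerivAt (fun u => g u i) (g' i) t) :
    HasDerivAt (fun u => f u ⬝ᵥ g u) (f' ⬝ᵥ g t + f t ⬝ᵥ g') t :=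
  (HasDerivAt.fun_sum fun i _ => (hf i).fun_mul (hg i)).congr_deriv Finset.sum_add_distrib

lemma dotProduct_eq_of_poisson {π π' T d : S → ℝ} {P P' : Matrix S S ℝ} {ξ : ℝ}
    (hsum : ∑ s, π' s = 0) (hbal : π' = π' ᵥ* P + π ᵥ* P')
    (hpoisson : ∀ s, d s = T s - ξ + (P *ᵥ d) s) :
    π' ⬝ᵥ T = π ⬝ᵥ (P' *ᵥ d) := by
  have hT : T = d - P *ᵥ d + ξ • 1 := by
    ext s
    simp only [Pi.add_apply, Pi.sub_apply, Pi.smul_apply, Pi.one_apply, smul_eq_mul, mul_one]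
    linarith [hpoisson s]
  have hπ'P : π' ᵥ* P = π' - π ᵥ* P' := eq_sub_of_add_eq hbal.symm
  calc π' ⬝ᵥ T = π' ⬝ᵥ d - (π' ᵥ* P) ⬝ᵥ d + ξ * ∑ s, π' s := by
        rw [hT, dotProduct_add, dotProduct_sub, dotProduct_mulVec, dotProduct_smul,
          dotProduct_one, smul_eq_mul]
    _ = (π ᵥ* P') ⬝ᵥ d := by rw [hsum, hπ'P, sub_dotProduct]; ring
    _ = π ⬝ᵥ (P' *ᵥ d) := (dotProduct_mulVec π P' d).symm

theorem hasDerivAt_average_reward {π T : ℝ → S → ℝ} {P : ℝ → Matrix S S ℝ} {d : S → ℝ}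
    {π' T' : S → ℝ} {P' : Matrix S S ℝ} {t : ℝ}
    (hπ : ∀ s, HasDerivAt (fun u => π u s) (π' s) t)
    (hT : ∀ s, HasDerivAt (fun u => T u s) (T' s) t)
    (hP : ∀ s s', HasDerivAt (fun u => P u s s') (P' s s') t)
    (hsum : ∀ u, ∑ s, π u s = 1) (hbal : ∀ u, π u ᵥ* P u = π u)
    (hpoisson : ∀ s, d s = T t s - π t ⬝ᵥ T t + (P t *ᵥ d) s) :
    HasDerivAt (fun u => π u ⬝ᵥ T u) (π t ⬝ᵥ (T' + P' *ᵥ d)) t := by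
  have hbal' : π' = π' ᵥ* P t + π t ᵥ* P' := by
    ext s'
    have h : HasDerivAt (fun u => (π u ᵥ* P u) s') ((π' ᵥ* P t + π t ᵥ* P') s') t :=
      hasDerivAt_dotProduct (g := fun u s => P u s s') hπ fun s => hP s s'
    exact (hπ s').unique (by simpa only [hbal] using h)
  have hπ'T : π' ⬝ᵥ T t = π t ⬝ᵥ (P' *ᵥ d) :=
    dotProduct_eq_of_poisson (sum_eq_zero_of_hasDerivAt_of_sum_const hπ hsum) hbal' hpoisson
  simpa only [hπ'T, dotProduct_add, add_comm] using hasDerivAt_dotProduct hπ hT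

end

theorem average_reward_gradient_q_general (S A : Type*) [Fintype S] [Fintype A]
    (R : S → A → ℝ) (Pa : A → S → S → ℝ)
    (χ : ℝ → S → A → ℝ)
    (hχdiff : ∀ s a, Differentiable ℝ (fun t => χ t s a))
    (hχsum : ∀ t s, ∑ a, χ t s a = 1)
    (T : ℝ → S → ℝ) (hT : ∀ t s, T t s = ∑ a, χ t s a * R s a)
    (P : ℝ → S → S → ℝ) (hP : ∀ t s s', P t s s' = ∑ a, χ t s a * Pa a s s')
    (π : ℝ → S → ℝ)
    (hπdiff : ∀ s, Differentiable ℝ (fun t => π t s))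
    (hπsum : ∀ t, ∑ s, π t s = 1)
    (hbal : ∀ t s', ∑ s, π t s * P t s s' = π t s')
    (ξ : ℝ → ℝ) (hξ : ∀ t, ξ t = ∑ s, π t s * T t s)
    (d : ℝ → S → ℝ)
    (hPoisson : ∀ t s, d t s = T t s - ξ t + ∑ s', P t s s' * d t s')
    (q : ℝ → S → A → ℝ)
    (hq : ∀ t s a, q t s a = R s a - ξ t + ∑ s', Pa a s s' * d t s')
    (t : ℝ) :
    deriv ξ t
      = ∑ s, ∑ a, π t s * deriv (fun u => χ u s a) t * q t s a := by
  set χ' : S → A → ℝ := fun s a => deriv (fun u => χ u s a) t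
  have hχ (s : S) (a : A) : HasDerivAt (fun u => χ u s a) (χ' s a) t :=
    (hχdiff s a t).hasDerivAt
  have hχ'sum (s : S) : ∑ a, χ' s a = 0 :=
    sum_eq_zero_of_hasDerivAt_of_sum_const (hχ s) (hχsum · s)
  have hT' (s : S) : HasDerivAt (fun u => T u s) (∑ a, χ' s a * R s a) t := by
    simpa only [hT] using HasDerivAt.fun_sum fun a _ => (hχ s a).mul_const (R s a)
  have hP' (s s' : S) : HasDerivAt (fun u => P u s s') (∑ a, χ' s a * Pa a s s') t := by
    simpa only [hP] using HasDerivAt.fun_sum fun a _ => (hχ s a).mul_const (Pa a s s')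
  have hξ' := hasDerivAt_average_reward (d := d t) (fun s => (hπdiff s t).hasDerivAt) hT' hP'
    hπsum (fun u => funext (hbal u)) fun s => (hPoisson t s).trans (by rw [hξ]; rfl)
  rw [show ξ = fun u => π u ⬝ᵥ T u from funext hξ, hξ'.deriv]
  refine Finset.sum_congr rfl fun s _ => ?_
  have hrow : ∑ a, χ' s a * q t s a
      = ∑ a, χ' s a * R s a + ∑ s', (∑ a, χ' s a * Pa a s s') * d t s' := by
    simp only [hq, mul_add, mul_sub, Finset.sum_add_distrib, Finset.sum_sub_distrib,
      ← Finset.sum_mul, hχ'sum, zero_mul, sub_zero, Finset.mul_sum]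
    rw [Finset.sum_comm]
    simp only [Finset.sum_mul, mul_assoc]
  simp only [Pi.add_apply, mulVec, dotProduct, mul_assoc, ← Finset.mul_sum]
  exact congrArg (π t s * ·) hrow.symm

/-- Policy-gradient expression in terms of the differential action values:
ξ'(t) = ∑_s ∑_a π(t)(s) χ'(t)(s,a) q(t)(s,a). -/
theorem average_reward_gradient_q (S A : Type*) [Fintype S] [Fintype A]
    [Nonempty S] [Nonempty A]
    (R : S → A → ℝ) (Pa : A → S → S → ℝ)
    (hPann : ∀ a s s', 0 ≤ Pa a s s')
    (hParow : ∀ a s, ∑ s', Pa a s s' = 1)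
    (χ : ℝ → S → A → ℝ)
    (hχdiff : ∀ s a, Differentiable ℝ (fun t => χ t s a))
    (hχnn : ∀ t s a, 0 ≤ χ t s a)
    (hχsum : ∀ t s, ∑ a, χ t s a = 1)
    (T : ℝ → S → ℝ) (hT : ∀ t s, T t s = ∑ a, χ t s a * R s a)
    (P : ℝ → S → S → ℝ) (hP : ∀ t s s', P t s s' = ∑ a, χ t s a * Pa a s s')
    (π : ℝ → S → ℝ)
    (hπdiff : ∀ s, Differentiable ℝ (fun t => π t s))
    (hπsum : ∀ t, ∑ s, π t s = 1)
    (hbal : ∀ t s', ∑ s, π t s * P t s s' = π t s')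
    (ξ : ℝ → ℝ) (hξ : ∀ t, ξ t = ∑ s, π t s * T t s)
    (d : ℝ → S → ℝ)
    (hPoisson : ∀ t s, d t s = T t s - ξ t + ∑ s', P t s s' * d t s')
    (q : ℝ → S → A → ℝ)
    (hq : ∀ t s a, q t s a = R s a - ξ t + ∑ s', Pa a s s' * d t s')
    (t : ℝ) :
    deriv ξ t
      = ∑ s, ∑ a, π t s * deriv (fun u => χ u s a) t * q t s a :=
  average_reward_gradient_q_general S A R Pa χ hχdiff hχsum T hT P hP π hπdiff hπsum hbal ξ hξ d
    hPoisson q hq t
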